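/- arXiv:1309.4055 — 6 statements merged into one kernel-verified Lean document; each statement's English description precedes it below -/
import Mathlib

section
/- Let r and r' be two distinct maximal repetitions in a word w having the same minimal period p. Then r and r' cannot have an overlap of length greater than or equal to p; that is, if beg(r) ≤ beg(r'), then end(r) − beg(r') + 1 < p. -/
open scoped Classical

namespace Gapped

variable {α : Type*}

/-- `p` is a period of the factor `w[i..j]` of the word `w` (positions are 1-indexed). -/
def IsPeriod (w : ℕ → α) (i j p : ℕ) : Prop :=
  0 < p ∧ ∀ t, i ≤ t → t + p ≤ j → w t = w (t + p)

/-- The minimal period `p(w[i..j])` of the factor `w[i..j]`. -/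
noncomputable def minPer (w : ℕ → α) (i j : ℕ) : ℕ :=
  sInf {p | IsPeriod w i j p}

/-- The length of the factor `w[i..j]`. -/
def flen (i j : ℕ) : ℕ := j - i + 1

/-- The exponent `e(w[i..j]) = |w[i..j]| / p(w[i..j])` of the factor `w[i..j]`. -/
noncomputable def expo (w : ℕ → α) (i j : ℕ) : ℝ :=
  (flen i j : ℝ) / (minPer w i j : ℝ)

/-- `w[i..j]` is a valid factor of a word of length `n`. -/
def IsFactor (n i j : ℕ) : Prop := 1 ≤ i ∧ i ≤ j ∧ j ≤ n

/-- `w[i..j]` is a repetition: a factor of exponent at least 2. -/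
def IsRep (w : ℕ → α) (n i j : ℕ) : Prop :=
  IsFactor n i j ∧ 2 * minPer w i j ≤ flen i j

/-- `w[i..j]` is a maximal repetition in the word `w` of length `n`. -/
def MaxRep (w : ℕ → α) (n i j : ℕ) : Prop :=
  IsRep w n i j ∧
  (1 < i → w (i - 1) ≠ w (i - 1 + minPer w i j)) ∧
  (j < n → w (j + 1 - minPer w i j) ≠ w (j + 1))

/-- `w[i..j]` is a δ-subrepetition: `1 + δ ≤ e(w[i..j]) < 2`. -/
def IsSubrep (w : ℕ → α) (n : ℕ) (δ : ℝ) (i j : ℕ) : Prop :=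
  IsFactor n i j ∧ 1 + δ ≤ expo w i j ∧ expo w i j < 2

/-- `w[i..j]` is a maximal δ-subrepetition in the word `w` of length `n`. -/
def MaxSubrep (w : ℕ → α) (n : ℕ) (δ : ℝ) (i j : ℕ) : Prop :=
  IsSubrep w n δ i j ∧
  (1 < i → w (i - 1) ≠ w (i - 1 + minPer w i j)) ∧
  (j < n → w (j + 1 - minPer w i j) ≠ w (j + 1))

/-- `w[i..j]` is a maximal subrepetition (a maximal δ-subrepetition for some 0 < δ < 1). -/
def MaxSubrepAny (w : ℕ → α) (n i j : ℕ) : Prop :=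
  ∃ δ : ℝ, 0 < δ ∧ δ < 1 ∧ MaxSubrep w n δ i j

/-- Gapped repeat `(i1, j1, p)`: left copy `w[i1..j1]`, period `p`, right copy
`w[i1+p..j1+p]`; both copies are equal and the gap `w[j1+1..i1+p-1]` is nonempty
(`c(σ) = flen i1 j1 < p`). -/
def IsGapped (w : ℕ → α) (n i1 j1 p : ℕ) : Prop :=
  1 ≤ i1 ∧ i1 ≤ j1 ∧ flen i1 j1 < p ∧ j1 + p ≤ n ∧
  ∀ t, i1 ≤ t → t ≤ j1 → w t = w (t + p)

/-- Maximal gapped repeat: the copies cannot be extended to the left or right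
with preserving the period. -/
def MaxGapped (w : ℕ → α) (n i1 j1 p : ℕ) : Prop :=
  IsGapped w n i1 j1 p ∧
  (1 < i1 → w (i1 - 1) ≠ w (i1 - 1 + p)) ∧
  (j1 + p < n → w (j1 + 1) ≠ w (j1 + 1 + p))

/-- The gapped repeat `(i1, j1, p)` is `a`-gapped: `p(σ) ≤ a · c(σ)`. -/
def AlphaGapped (a : ℝ) (i1 j1 p : ℕ) : Prop :=
  (p : ℝ) ≤ a * (flen i1 j1 : ℝ)

/-- Maximal `a`-gapped repeat. -/
def MaxAlphaGapped (w : ℕ → α) (n : ℕ) (a : ℝ) (i1 j1 p : ℕ) : Prop :=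
  MaxGapped w n i1 j1 p ∧ AlphaGapped a i1 j1 p

/-- `w[I..J]` is the extension of the repetition `w[i..j]`: the maximal repetition
containing it with the same minimal period. -/
def IsExtension (w : ℕ → α) (n i j I J : ℕ) : Prop :=
  MaxRep w n I J ∧ I ≤ i ∧ j ≤ J ∧ minPer w I J = minPer w i j

/-- The gapped repeat `(i1, j1, p)` is periodic: both copies are repetitions. -/
def PeriodicGapped (w : ℕ → α) (n i1 j1 p : ℕ) : Prop :=
  IsRep w n i1 j1 ∧ IsRep w n (i1 + p) (j1 + p)

/-- The maximal gapped repeat `(i1, j1, p)` is a private repeat generated by the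
maximal repetition `w[I..J]`: it is periodic and `w[I..J]` is the common extension
of both copies. -/
def PrivateGenBy (w : ℕ → α) (n i1 j1 p I J : ℕ) : Prop :=
  MaxGapped w n i1 j1 p ∧ PeriodicGapped w n i1 j1 p ∧
  IsExtension w n i1 j1 I J ∧ IsExtension w n (i1 + p) (j1 + p) I J

/-- The maximal gapped repeat `(i1, j1, p)` is private. -/
def IsPrivate (w : ℕ → α) (n i1 j1 p : ℕ) : Prop :=
  ∃ I J, PrivateGenBy w n i1 j1 p I J

/-- `m` is a periodic-prefix length for the copy `w[i..j]`: the prefix of length `m`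
is a repetition whose length is at least half of the copy length. -/
def PerPrefix (w : ℕ → α) (n i j m : ℕ) : Prop :=
  1 ≤ m ∧ m ≤ flen i j ∧ IsRep w n i (i + m - 1) ∧ flen i j ≤ 2 * m

/-- `m` is a periodic-suffix length for the copy `w[i..j]`. -/
def PerSuffix (w : ℕ → α) (n i j m : ℕ) : Prop :=
  1 ≤ m ∧ m ≤ flen i j ∧ IsRep w n (j + 1 - m) j ∧ flen i j ≤ 2 * m

/-- `m` is the length of the periodic prefix (the longest prefix which is a repetition
of length at least half the copy length) of the copy `w[i..j]`. -/
def LongestPerPrefix (w : ℕ → α) (n i j m : ℕ) : Prop :=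
  PerPrefix w n i j m ∧ ∀ m', PerPrefix w n i j m' → m' ≤ m

/-- The gapped repeat `(i1, j1, p)` is prefix semiperiodic. -/
def PrefixSemi (w : ℕ → α) (n i1 j1 p : ℕ) : Prop :=
  ¬ IsRep w n i1 j1 ∧ ¬ IsRep w n (i1 + p) (j1 + p) ∧
  (∃ m, PerPrefix w n i1 j1 m) ∧ (∃ m, PerPrefix w n (i1 + p) (j1 + p) m)

/-- The gapped repeat `(i1, j1, p)` is suffix semiperiodic. -/
def SuffixSemi (w : ℕ → α) (n i1 j1 p : ℕ) : Prop :=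
  ¬ IsRep w n i1 j1 ∧ ¬ IsRep w n (i1 + p) (j1 + p) ∧
  (∃ m, PerSuffix w n i1 j1 m) ∧ (∃ m, PerSuffix w n (i1 + p) (j1 + p) m)

/-- The gapped repeat `(i1, j1, p)` is ordinary: neither periodic nor semiperiodic. -/
def Ordinary (w : ℕ → α) (n i1 j1 p : ℕ) : Prop :=
  ¬ PeriodicGapped w n i1 j1 p ∧ ¬ PrefixSemi w n i1 j1 p ∧ ¬ SuffixSemi w n i1 j1 p

/-- `(i1, j1, p)` belongs to `PSP_k`: it is a prefix semiperiodic maximal `k`-gapped repeat. -/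
def InPSP (w : ℕ → α) (n k i1 j1 p : ℕ) : Prop :=
  MaxGapped w n i1 j1 p ∧ AlphaGapped (k : ℝ) i1 j1 p ∧ PrefixSemi w n i1 j1 p

/-- The repeat `(i1, j1, p) ∈ PSP_k` is generated from the left by `w[I1..J1]` per
`w[I2..J2]`: these are the extensions of the periodic prefixes of the left and right
copies respectively, and `|w[I1..J1]| ≤ |w[I2..J2]|`. -/
def GenFromLeft (w : ℕ → α) (n k i1 j1 p I1 J1 I2 J2 : ℕ) : Prop :=
  InPSP w n k i1 j1 p ∧
  ∃ m, LongestPerPrefix w n i1 j1 m ∧ LongestPerPrefix w n (i1 + p) (j1 + p) m ∧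
    IsExtension w n i1 (i1 + m - 1) I1 J1 ∧
    IsExtension w n (i1 + p) (i1 + p + m - 1) I2 J2 ∧
    flen I1 J1 ≤ flen I2 J2

/-- The maximal repetition `w[I2..J2]` is left associated with the maximal repetition
`w[I1..J1]`: some repeat from `PSP_k` is generated from the left by `w[I1..J1]` per
`w[I2..J2]`. -/
def LeftAssociated (w : ℕ → α) (n k I1 J1 I2 J2 : ℕ) : Prop :=
  ∃ i1 j1 p, GenFromLeft w n k i1 j1 p I1 J1 I2 J2

/-- The periodic maximal `k`-gapped repeat `(i1, j1, p)` is non-private and is generated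
from the left by the maximal repetition `w[I..J]`: `w[I..J]` is the extension of the
left copy, the extension of the right copy is a different maximal repetition which is
not shorter. -/
def GenFromLeftPeriodic (w : ℕ → α) (n k i1 j1 p I J : ℕ) : Prop :=
  MaxGapped w n i1 j1 p ∧ AlphaGapped (k : ℝ) i1 j1 p ∧ PeriodicGapped w n i1 j1 p ∧
  IsExtension w n i1 j1 I J ∧
  ∃ I' J', IsExtension w n (i1 + p) (j1 + p) I' J' ∧ (I', J') ≠ (I, J) ∧
    flen I J ≤ flen I' J'

/-- `(i1, j1, p)` belongs to `OP_k`: it is an ordinary maximal `k`-gapped repeat. -/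
def InOP (w : ℕ → α) (n k i1 j1 p : ℕ) : Prop :=
  MaxGapped w n i1 j1 p ∧ AlphaGapped (k : ℝ) i1 j1 p ∧ Ordinary w n i1 j1 p

/-- The point `(j', p')` covers the point `(j'', p'')`. -/
def Covers (k : ℕ) (j' p' j'' p'' : ℕ) : Prop :=
  (p' : ℝ) - (p' : ℝ) / (4 * k) ≤ (p'' : ℝ) ∧ (p'' : ℝ) ≤ (p' : ℝ) ∧
  (j' : ℝ) - (p' : ℝ) / (3 * k) ≤ (j'' : ℝ) ∧ (j'' : ℝ) ≤ (j' : ℝ)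

/-- The maximal gapped repeat `(i1, j1, p)` is principal: it is the respective repeat
of some maximal subrepetition (which then spans `w[i1..j1+p]` and has minimal period `p`). -/
def Principal (w : ℕ → α) (n i1 j1 p : ℕ) : Prop :=
  ∃ δ : ℝ, 0 < δ ∧ δ < 1 ∧ MaxSubrep w n δ i1 (j1 + p) ∧ minPer w i1 (j1 + p) = p

/-- The gapped repeat `(i1, j1, p)` is stretched by the maximal repetition `w[I..J]`. -/
def StretchedByRep (w : ℕ → α) (n i1 j1 p I J : ℕ) : Prop :=
  MaxRep w n I J ∧ I ≤ i1 ∧ j1 + p ≤ J ∧ minPer w I J < p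

/-- The gapped repeat `(i1, j1, p)` is stretched by the maximal subrepetition `w[I..J]`. -/
def StretchedBySub (w : ℕ → α) (n i1 j1 p I J : ℕ) : Prop :=
  MaxSubrepAny w n I J ∧ I ≤ i1 ∧ j1 + p ≤ J ∧ minPer w I J < p

/-- The gapped repeat `(i1, j1, p)` is stretchable. -/
def Stretchable (w : ℕ → α) (n i1 j1 p : ℕ) : Prop :=
  ∃ I J, StretchedByRep w n i1 j1 p I J ∨ StretchedBySub w n i1 j1 p I J

/-- `u` (with letters at positions `1..m`) is a primitive word of length `m`:
its exponent is not an integer greater than 1. -/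
def Primitive (u : ℕ → α) (m : ℕ) : Prop :=
  ¬ (minPer u 1 m ∣ m ∧ minPer u 1 m < m)

/-- There is an occurrence of the square `uu` (where `|u| = m`) at position `i` in the
word `w` of length `n`. -/
def OccSquare (w : ℕ → α) (n : ℕ) (u : ℕ → α) (m i : ℕ) : Prop :=
  1 ≤ i ∧ i + 2 * m - 1 ≤ n ∧
  ∀ t, 1 ≤ t → t ≤ m → w (i + t - 1) = u t ∧ w (i + m + t - 1) = u t

/-- `E(w)`: the sum of exponents of all maximal repetitions in the word `w` of length `n`. -/
noncomputable def Ew (w : ℕ → α) (n : ℕ) : ℝ :=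
  ∑ r ∈ (Finset.Icc 1 n ×ˢ Finset.Icc 1 n).filter (fun r => MaxRep w n r.1 r.2),
    expo w r.1 r.2

/-- Two distinct maximal repetitions with the same minimal period `p` cannot have an
overlap of length `≥ p`: if `beg(r) ≤ beg(r')` then `end(r) - beg(r') + 1 < p`. -/
theorem overlap_of_maximal_repetitions (w : ℕ → α) (n : ℕ) (i j i' j' p : ℕ)
    (hr : MaxRep w n i j) (hr' : MaxRep w n i' j')
    (hp : minPer w i j = p) (hp' : minPer w i' j' = p)
    (hne : (i, j) ≠ (i', j')) (hle : i ≤ i') :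
    (j : ℤ) - (i' : ℤ) + 1 < (p : ℤ) := by
  by_contra hcon
  -- basic facts
  obtain ⟨⟨⟨h1i, hij, hjn⟩, hrep⟩, hleft, hright⟩ := hr
  obtain ⟨⟨⟨h1i', hij', hjn'⟩, hrep'⟩, hleft', hright'⟩ := hr'
  -- the sets of periods are nonempty
  have hne1 : {q | IsPeriod w i j q}.Nonempty := by
    refine ⟨j - i + 1, by omega, fun t ht1 ht2 => ?_⟩
    omega
  have hne2 : {q | IsPeriod w i' j' q}.Nonempty := by
    refine ⟨j' - i' + 1, by omega, fun t ht1 ht2 => ?_⟩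
    omega
  have hP : IsPeriod w i j p := hp ▸ Nat.sInf_mem hne1
  have hP' : IsPeriod w i' j' p := hp' ▸ Nat.sInf_mem hne2
  have hpos : 0 < p := hP.1
  have h2p : 2 * p ≤ j - i + 1 := by
    have := hrep; rw [hp] at this; simpa [flen] using this
  have h2p' : 2 * p ≤ j' - i' + 1 := by
    have := hrep'; rw [hp'] at this; simpa [flen] using this
  have hov : i' + p ≤ j + 1 := by omega
  rcases lt_trichotomy j j' with hjj | hjj | hjj
  · -- j < j' : contradict right-maximality of r
    rw [hp] at hright
    apply hright (by omega)
    have := hP'.2 (j + 1 - p) (by omega) (by omega)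
    have heq : j + 1 - p + p = j + 1 := by omega
    rwa [heq] at this
  · -- j = j' : then i < i', contradict left-maximality of r'
    have hii : i < i' := by
      rcases lt_or_eq_of_le hle with h | h
      · exact h
      · exact absurd (by rw [h, hjj]) hne
    rw [hp'] at hleft'
    apply hleft' (by omega)
    exact hP.2 (i' - 1) (by omega) (by omega)
  · -- j' < j : contradict right-maximality of r'
    rw [hp'] at hright'
    apply hright' (by omega)
    have := hP.2 (j' + 1 - p) (by omega) (by omega)
    have heq : j' + 1 - p + p = j' + 1 := by omega
    rwa [heq] at this

end Gapped
end

section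
/- Let 0 < δ < 1. Then in any word w, the number of maximal δ-subrepetitions is no more than the number of maximal (1/δ)-gapped repeats. -/
open scoped Classical

namespace Gapped

variable {α : Type*}

/-- The full length is always a (vacuous) period of a factor. -/
lemma isPeriod_flen (w : ℕ → α) {i j : ℕ} (hij : i ≤ j) :
    IsPeriod w i j (flen i j) := by
  refine ⟨by simp only [flen]; omega, fun t ht htp => ?_⟩
  exfalso
  simp only [flen] at htp
  omega

/-- Basic facts about a maximal δ-subrepetition. -/
lemma subrep_facts (w : ℕ → α) (n : ℕ) (δ : ℝ) (h0 : 0 < δ)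
    {i j : ℕ} (h : MaxSubrep w n δ i j) :
    IsPeriod w i j (minPer w i j) ∧ i + minPer w i j ≤ j ∧
      flen i j < 2 * minPer w i j ∧
      (1 + δ) * (minPer w i j : ℝ) ≤ (flen i j : ℝ) := by
  obtain ⟨⟨⟨hi1, hij, hjn⟩, hlo, hhi⟩, _, _⟩ := h
  have hne : {p | IsPeriod w i j p}.Nonempty := ⟨flen i j, isPeriod_flen w hij⟩
  have hmem : IsPeriod w i j (minPer w i j) := Nat.sInf_mem hne
  set p := minPer w i j with hp
  have hp0 : 0 < p := hmem.1
  have hp0' : (0 : ℝ) < (p : ℝ) := by exact_mod_cast hp0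
  rw [expo, div_lt_iff₀ hp0'] at hhi
  rw [expo, le_div_iff₀ hp0'] at hlo
  have hlt : (p : ℝ) < (flen i j : ℝ) := by nlinarith
  have hltn : p < flen i j := by exact_mod_cast hlt
  refine ⟨hmem, ?_, ?_, hlo⟩
  · simp only [flen] at hltn; omega
  · have : (flen i j : ℝ) < 2 * (p : ℝ) := by linarith
    exact_mod_cast this

/-- For `0 < δ < 1`, the number of maximal δ-subrepetitions in a word is at most the
number of maximal (1/δ)-gapped repeats. -/
theorem subrep_count_le_gapped_count (w : ℕ → α) (n : ℕ) (δ : ℝ)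
    (h0 : 0 < δ) (h1 : δ < 1) :
    {r : ℕ × ℕ | MaxSubrep w n δ r.1 r.2}.ncard
      ≤ {σ : ℕ × ℕ × ℕ | MaxAlphaGapped w n (1 / δ) σ.1 σ.2.1 σ.2.2}.ncard := by
  classical
  set T := {σ : ℕ × ℕ × ℕ | MaxAlphaGapped w n (1 / δ) σ.1 σ.2.1 σ.2.2} with hT
  have hTfin : T.Finite := by
    apply Set.Finite.subset
      (Set.Finite.prod (Set.finite_Icc 1 n)
        (Set.Finite.prod (Set.finite_Icc 1 n) (Set.finite_Icc 1 n)))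
    rintro ⟨i1, j1, p⟩ hσ
    have hσ' : MaxAlphaGapped w n (1 / δ) i1 j1 p := hσ
    obtain ⟨⟨⟨h1, h2, h3, h4, _⟩, _⟩, _⟩ := hσ'
    simp only [flen] at h3
    simp only [Set.mem_prod, Set.mem_Icc]
    omega
  refine Set.ncard_le_ncard_of_injOn
    (fun r => (r.1, r.2 - minPer w r.1 r.2, minPer w r.1 r.2)) ?_ ?_ hTfin
  · rintro ⟨i, j⟩ hr
    have hr' : MaxSubrep w n δ i j := hr
    obtain ⟨hper, hipj, hlt2, hlo⟩ := subrep_facts w n δ h0 hr'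
    obtain ⟨⟨⟨hi1, hij, hjn⟩, _, _⟩, hL, hR⟩ := hr'
    set p := minPer w i j with hp
    show (i, j - p, p) ∈ T
    simp only [hT, Set.mem_setOf_eq]
    have hp0 : 0 < p := hper.1
    have hflen : flen i (j - p) = flen i j - p := by simp only [flen]; omega
    have hple : p ≤ flen i j := by simp only [flen] at hlt2 ⊢; omega
    have hcast : (flen i (j - p) : ℝ) = (flen i j : ℝ) - (p : ℝ) := by
      rw [hflen, Nat.cast_sub hple]
    refine ⟨⟨⟨hi1, by omega, ?_, by omega, ?_⟩, hL, ?_⟩, ?_⟩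
    · simp only [flen] at hlt2 ⊢; omega
    · intro t ht ht'
      exact hper.2 t ht (by omega)
    · intro hlt'
      have h1 : j - p + 1 = j + 1 - p := by omega
      have h2 : j - p + 1 + p = j + 1 := by omega
      rw [h2, h1]
      exact hR (by omega)
    · show (p : ℝ) ≤ (1 / δ) * (flen i (j - p) : ℝ)
      rw [hcast, one_div, inv_mul_eq_div, le_div_iff₀ h0]
      nlinarith
  · rintro ⟨i, j⟩ hr ⟨i', j'⟩ hr' heq
    simp only [Prod.mk.injEq] at heq
    obtain ⟨he1, he2, he3⟩ := heq
    obtain ⟨hper, hipj, -, -⟩ := subrep_facts w n δ h0 (show MaxSubrep w n δ i j from hr)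
    obtain ⟨hper', hipj', -, -⟩ := subrep_facts w n δ h0 (show MaxSubrep w n δ i' j' from hr')
    have : j = j' := by omega
    simp [he1, this]

end Gapped
end

section
/- A maximal gapped repeat σ in a word w is principal if and only if p(w[beg(σ)..end(σ)]) = p(σ), i.e., the minimal period of the factor of w spanned by σ equals the period of σ. -/
open scoped Classical

namespace Gapped

variable {α : Type*}

/-- A maximal gapped repeat `σ` is principal iff the minimal period of the factor
`w[beg(σ)..end(σ)]` spanned by `σ` equals the period of `σ`. -/
theorem principal_iff_minPer_eq (w : ℕ → α) (n i1 j1 p : ℕ)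
    (h : MaxGapped w n i1 j1 p) :
    Principal w n i1 j1 p ↔ minPer w i1 (j1 + p) = p := by
  constructor
  · rintro ⟨δ, -, -, -, hp⟩; exact hp
  · intro hmin
    obtain ⟨⟨h1, h12, hflen, hn, hper⟩, hLc, hRc⟩ := h
    have hflen1 : 1 ≤ flen i1 j1 := by unfold flen; omega
    have hp0 : 0 < p := by omega
    have hlen : flen i1 (j1 + p) = flen i1 j1 + p := by unfold flen; omega
    have hLlt : flen i1 (j1 + p) < 2 * p := by omega
    have hLgt : p < flen i1 (j1 + p) := by omega
    have hpR : (0:ℝ) < p := by exact_mod_cast hp0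
    have hexpo_lt : expo w i1 (j1 + p) < 2 := by
      unfold expo
      rw [hmin, div_lt_iff₀ hpR]
      have : (flen i1 (j1 + p) : ℝ) < 2 * p := by exact_mod_cast hLlt
      linarith
    have hexpo_gt : 1 < expo w i1 (j1 + p) := by
      unfold expo
      rw [hmin, lt_div_iff₀ hpR]
      have : (p:ℝ) < flen i1 (j1 + p) := by exact_mod_cast hLgt
      linarith
    refine ⟨expo w i1 (j1 + p) - 1, by linarith, by linarith,
      ⟨⟨⟨h1, by omega, hn⟩, by linarith, hexpo_lt⟩, ?_, ?_⟩, hmin⟩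
    · rw [hmin]; exact hLc
    · rw [hmin]; intro hlt
      have h2 := hRc (by omega)
      have e1 : j1 + p + 1 - p = j1 + 1 := by omega
      have e2 : j1 + p + 1 = j1 + 1 + p := by omega
      rw [e1, e2]; exact h2

end Gapped
end

section
/- A maximal gapped repeat in a word w is principal if and only if it is not stretchable. -/
open scoped Classical

namespace Gapped

variable {α : Type*}

lemma isPeriod_trivial (w : ℕ → α) (i j : ℕ) : IsPeriod w i j (j - i + 1) :=
  ⟨by omega, fun t ht1 ht2 => absurd ht2 (by omega)⟩

lemma minPer_isPeriod (w : ℕ → α) (i j : ℕ) : IsPeriod w i j (minPer w i j) := by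
  have : {p | IsPeriod w i j p}.Nonempty := ⟨j - i + 1, isPeriod_trivial w i j⟩
  exact Nat.sInf_mem this

lemma minPer_le {w : ℕ → α} {i j p : ℕ} (h : IsPeriod w i j p) : minPer w i j ≤ p :=
  Nat.sInf_le h

lemma isPeriod_mono {w : ℕ → α} {I J i j r : ℕ} (hI : I ≤ i) (hJ : j ≤ J)
    (h : IsPeriod w I J r) : IsPeriod w i j r :=
  ⟨h.1, fun t ht1 ht2 => h.2 t (hI.trans ht1) (ht2.trans hJ)⟩

/-- A maximal gapped repeat is principal iff it is not stretchable. -/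
theorem principal_iff_not_stretchable (w : ℕ → α) (n i1 j1 p : ℕ)
    (h : MaxGapped w n i1 j1 p) :
    Principal w n i1 j1 p ↔ ¬ Stretchable w n i1 j1 p := by
  obtain ⟨⟨hi1, hij, hcp, hjn, hper⟩, hLmax, hRmax⟩ := h
  have hcp' : j1 - i1 + 1 < p := hcp
  have hp_per : IsPeriod w i1 (j1 + p) p :=
    ⟨by omega, fun t ht1 ht2 => hper t ht1 (by omega)⟩
  have hq_per : IsPeriod w i1 (j1 + p) (minPer w i1 (j1 + p)) :=
    minPer_isPeriod w i1 (j1 + p)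
  set q := minPer w i1 (j1 + p) with hq_def
  have hqp : q ≤ p := minPer_le hp_per
  have hq_pos : 0 < q := hq_per.1
  constructor
  · -- Principal → ¬ Stretchable
    rintro ⟨δ, _, _, _, hqp'⟩ ⟨I, J, hstr⟩
    have hbounds : I ≤ i1 ∧ j1 + p ≤ J ∧ minPer w I J < p := by
      rcases hstr with ⟨_, a, b, c⟩ | ⟨_, a, b, c⟩ <;> exact ⟨a, b, c⟩
    obtain ⟨hIi, hJj, hlt⟩ := hbounds
    have hle : minPer w i1 (j1 + p) ≤ minPer w I J :=
      minPer_le (isPeriod_mono hIi hJj (minPer_isPeriod w I J))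
    omega
  · -- ¬ Stretchable → Principal
    intro hns
    rcases eq_or_lt_of_le hqp with hq_eq | hq_lt
    · -- q = p : the repeat is principal directly
      have hflen : flen i1 (j1 + p) = (j1 - i1 + 1) + p := by
        simp only [flen]; omega
      have hp0 : (0 : ℝ) < (p : ℝ) := by exact_mod_cast (by omega : 0 < p)
      have hLlt : ((flen i1 (j1 + p) : ℕ) : ℝ) < 2 * (p : ℝ) := by
        exact_mod_cast (by omega : flen i1 (j1 + p) < 2 * p)
      have hLgt : (p : ℝ) < ((flen i1 (j1 + p) : ℕ) : ℝ) := by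
        exact_mod_cast (by omega : p < flen i1 (j1 + p))
      have hexpo : expo w i1 (j1 + p) = (flen i1 (j1 + p) : ℝ) / (p : ℝ) := by
        rw [expo, ← hq_def, hq_eq]
      refine ⟨(flen i1 (j1 + p) : ℝ) / (p : ℝ) - 1, ?_, ?_,
        ⟨⟨⟨hi1, by omega, hjn⟩, ?_, ?_⟩, ?_, ?_⟩, hq_eq⟩
      · rw [sub_pos, lt_div_iff₀ hp0]; linarith
      · rw [sub_lt_iff_lt_add, div_lt_iff₀ hp0]; linarith
      · rw [hexpo]; ring_nf; exact le_refl _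
      · rw [hexpo, div_lt_iff₀ hp0]; linarith
      · rw [← hq_def, hq_eq]; exact hLmax
      · intro hn
        rw [← hq_def, hq_eq]
        have e1 : j1 + p + 1 - p = j1 + 1 := by omega
        have e2 : j1 + 1 + p = j1 + p + 1 := by omega
        rw [e1]
        intro hc
        exact hRmax (by omega) (by rw [e2]; exact hc)
    · -- q < p : the repeat is stretchable, contradiction
      exfalso; apply hns
      -- Left extension
      have hi1mem : i1 ∈ {I | 1 ≤ I ∧ I ≤ i1 ∧
          ∀ t, I ≤ t → t + q ≤ j1 + p → w t = w (t + q)} :=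
        ⟨hi1, le_refl _, hq_per.2⟩
      set I := sInf {I | 1 ≤ I ∧ I ≤ i1 ∧
          ∀ t, I ≤ t → t + q ≤ j1 + p → w t = w (t + q)} with hIdef
      have hImem := Nat.sInf_mem ⟨i1, hi1mem⟩
      rw [← hIdef] at hImem
      obtain ⟨hI1, hIi1, hIper⟩ := hImem
      have hIleft : 1 < I → w (I - 1) ≠ w (I - 1 + q) := by
        intro hI hc
        have hmem : I ≤ I - 1 := by
          rw [hIdef]
          refine Nat.sInf_le ⟨by omega, by omega, fun t ht1 ht2 => ?_⟩
          rcases Nat.eq_or_lt_of_le ht1 with he | hl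
          · rw [← he]; exact hc
          · exact hIper t (by omega) ht2
        omega
      -- Right extension
      set P : ℕ → Prop := fun d => j1 + p + d ≤ n ∧
        ∀ t, i1 ≤ t → t + q ≤ j1 + p + d → w t = w (t + q) with hPdef
      have hP0 : P 0 := ⟨by omega, fun t a b => hq_per.2 t a (by omega)⟩
      set d := Nat.findGreatest P (n - (j1 + p)) with hddef
      have hPd : P d := Nat.findGreatest_spec (Nat.zero_le _) hP0
      obtain ⟨hJn, hJper⟩ := hPd
      have hJright : j1 + p + d < n → w (j1 + p + d + 1 - q) ≠ w (j1 + p + d + 1) := by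
        intro hJ hc
        have hnot : ¬ P (d + 1) :=
          Nat.findGreatest_is_greatest (n := n - (j1 + p)) (by omega) (by omega)
        apply hnot
        refine ⟨by omega, fun t ht1 ht2 => ?_⟩
        rcases Nat.lt_or_ge (t + q) (j1 + p + d + 1) with h' | h'
        · exact hJper t ht1 (by omega)
        · have hqle : q ≤ j1 + p + d + 1 := by omega
          have ht : t = j1 + p + d + 1 - q := by omega
          have e : j1 + p + d + 1 - q + q = j1 + p + d + 1 := by omega
          rw [ht, e]
          exact hc
      -- The full factor w[I .. j1+p+d] has period q
      have hfull : IsPeriod w I (j1 + p + d) q := by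
        refine ⟨hq_pos, fun t ht1 ht2 => ?_⟩
        rcases Nat.lt_or_ge t i1 with h' | h'
        · exact hIper t ht1 (by omega)
        · exact hJper t h' ht2
      have hminIJ : minPer w I (j1 + p + d) = q := by
        have h1 : minPer w I (j1 + p + d) ≤ q := minPer_le hfull
        have h2 : IsPeriod w i1 (j1 + p) (minPer w I (j1 + p + d)) :=
          isPeriod_mono hIi1 (by omega) (minPer_isPeriod w I (j1 + p + d))
        have h3 : minPer w i1 (j1 + p) ≤ minPer w I (j1 + p + d) := minPer_le h2
        omega
      have hflenIJ : q < flen I (j1 + p + d) := by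
        simp only [flen]; omega
      refine ⟨I, j1 + p + d, ?_⟩
      by_cases hcase : 2 * q ≤ flen I (j1 + p + d)
      · -- maximal repetition stretches the repeat
        left
        refine ⟨⟨⟨⟨hI1, by omega, hJn⟩, by rw [hminIJ]; exact hcase⟩, ?_, ?_⟩,
          hIi1, by omega, by rw [hminIJ]; exact hq_lt⟩
        · rw [hminIJ]; exact hIleft
        · rw [hminIJ]; exact hJright
      · -- maximal subrepetition stretches the repeat
        right
        push_neg at hcase
        have hq0 : (0 : ℝ) < (q : ℝ) := by exact_mod_cast hq_pos
        have hgt : ((q : ℕ) : ℝ) < (flen I (j1 + p + d) : ℝ) := by exact_mod_cast hflenIJ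
        have hlt2 : ((flen I (j1 + p + d) : ℕ) : ℝ) < 2 * (q : ℝ) := by
          exact_mod_cast hcase
        have hexpo : expo w I (j1 + p + d) = (flen I (j1 + p + d) : ℝ) / (q : ℝ) := by
          rw [expo, hminIJ]
        refine ⟨⟨(flen I (j1 + p + d) : ℝ) / (q : ℝ) - 1, ?_, ?_,
          ⟨⟨⟨hI1, by omega, hJn⟩, ?_, ?_⟩, ?_, ?_⟩⟩,
          hIi1, by omega, by rw [hminIJ]; exact hq_lt⟩
        · rw [sub_pos, lt_div_iff₀ hq0]; linarith
        · rw [sub_lt_iff_lt_add, div_lt_iff₀ hq0]; linarith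
        · rw [hexpo]; ring_nf; exact le_refl _
        · rw [hexpo, div_lt_iff₀ hq0]; linarith
        · rw [hminIJ]; exact hIleft
        · rw [hminIJ]; exact hJright

end Gapped
end

section
/- Any maximal repetition r in a word w generates no more than e(r)/2 different private maximal gapped repeats. -/
open scoped Classical

namespace Gapped

variable {α : Type*}

/-- Auxiliary: a period can be iterated `k` times. -/
lemma periodMul (w : ℕ → α) {I J q : ℕ} (hq : IsPeriod w I J q) :
    ∀ k t, I ≤ t → t + k * q ≤ J → w t = w (t + k * q) := by
  intro k
  induction k with
  | zero => intro t _ _; simp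
  | succ k ih =>
    intro t ht hle
    have hmul : (k + 1) * q = k * q + q := by ring
    have h1 : w t = w (t + q) := hq.2 t ht (by omega)
    have h2 : w (t + q) = w (t + q + k * q) :=
      ih (t + q) (by omega) (by omega)
    have h3 : t + q + k * q = t + (k + 1) * q := by omega
    rw [h1, h2, h3]

/-- Any maximal repetition `w[I..J]` generates at most `e(r)/2` different private
maximal gapped repeats. -/
theorem count_private_generated (w : ℕ → α) (n I J : ℕ) (hr : MaxRep w n I J) :
    ({σ : ℕ × ℕ × ℕ | PrivateGenBy w n σ.1 σ.2.1 σ.2.2 I J}.ncard : ℝ)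
      ≤ expo w I J / 2 := by
  have hIJ : I ≤ J := hr.1.1.2.1
  have hI1 : 1 ≤ I := hr.1.1.1
  have hJn : J ≤ n := hr.1.1.2.2
  have hLdef : flen I J = J - I + 1 := rfl
  have hne : {p | IsPeriod w I J p}.Nonempty :=
    ⟨flen I J, ⟨by omega, fun t ht hle => absurd hle (by omega)⟩⟩
  have hq : IsPeriod w I J (minPer w I J) := Nat.sInf_mem hne
  set q := minPer w I J with hqdef
  set L := flen I J with hLd
  have hq0 : 0 < q := hq.1
  have h2qL : 2 * q ≤ L := hr.1.2
  set B := Finset.Icc (L / (2 * q) + 1) ((L - 2 * q) / q) with hBdef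
  have hsub : {σ : ℕ × ℕ × ℕ | PrivateGenBy w n σ.1 σ.2.1 σ.2.2 I J} ⊆
      (fun m => (I, J - m * q, m * q)) '' ↑B := by
    rintro ⟨i1, j1, p⟩ hσ
    have hσ' : PrivateGenBy w n i1 j1 p I J := hσ
    clear hσ
    obtain ⟨⟨⟨h1i, hij, hclt, hjn, hcopy⟩, hmax1, hmax2⟩, hper, hLx, hRx⟩ := hσ'
    obtain ⟨_, hIi, hjJ, hqeq⟩ := hLx
    obtain ⟨_, hIi', hjpJ, hqeq'⟩ := hRx
    have hq1 : minPer w i1 j1 = q := by rw [hqdef, hqeq]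
    have hc : flen i1 j1 = j1 - i1 + 1 := rfl
    have hcrep : 2 * q ≤ flen i1 j1 := by rw [← hq1]; exact hper.1.2
    -- divisibility q ∣ p
    have hkq : q * (p / q) + p % q = p := Nat.div_add_mod p q
    have hcm : q * (p / q) = (p / q) * q := Nat.mul_comm _ _
    have hdvd : q ∣ p := by
      by_contra hnd
      have hs0 : 0 < p % q :=
        Nat.pos_of_ne_zero (fun h => hnd (Nat.dvd_of_mod_eq_zero h))
      have hsper : IsPeriod w i1 j1 (p % q) := by
        refine ⟨hs0, fun t ht hle => ?_⟩
        have h1 : w t = w (t + p) := hcopy t ht (by omega)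
        have h2 : w (t + p % q) = w (t + p % q + (p / q) * q) :=
          periodMul w hq (p / q) (t + p % q) (by omega) (by omega)
        have h3 : t + p % q + (p / q) * q = t + p := by omega
        rw [h2, h3, h1]
      have hle : minPer w i1 j1 ≤ p % q := Nat.sInf_le hsper
      have hlt : p % q < q := Nat.mod_lt p hq0
      omega
    obtain ⟨k, hk⟩ := hdvd
    have hcm2 : k * q = q * k := Nat.mul_comm _ _
    -- left copy starts at I
    have hi1I : i1 = I := by
      by_contra hne'
      have hlt : I < i1 := lt_of_le_of_ne hIi (Ne.symm hne')
      have hstep : w (i1 - 1) = w (i1 - 1 + k * q) :=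
        periodMul w hq k (i1 - 1) (by omega) (by omega)
      have heq : i1 - 1 + k * q = i1 - 1 + p := by omega
      rw [heq] at hstep
      exact hmax1 (by omega) hstep
    -- right copy ends at J
    have hjp : j1 + p = J := by
      by_contra hne'
      have hlt : j1 + p < J := lt_of_le_of_ne hjpJ hne'
      have hstep : w (j1 + 1) = w (j1 + 1 + k * q) :=
        periodMul w hq k (j1 + 1) (by omega) (by omega)
      have heq : j1 + 1 + k * q = j1 + 1 + p := by omega
      rw [heq] at hstep
      exact hmax2 (by omega) hstep
    have hLc : L = flen i1 j1 + p := by omega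
    refine ⟨k, Finset.mem_coe.2 (Finset.mem_Icc.2 ⟨?_, ?_⟩), ?_⟩
    · -- L / (2*q) + 1 ≤ k
      have hprod : k * (2 * q) = 2 * (q * k) := by ring
      have hlt2 : L < k * (2 * q) := by omega
      have := (Nat.div_lt_iff_lt_mul (by omega : 0 < 2 * q)).2 hlt2
      omega
    · exact (Nat.le_div_iff_mul_le hq0).2 (by omega)
    · show (I, J - k * q, k * q) = (i1, j1, p)
      have h1 : k * q = p := by omega
      have h2 : J - p = j1 := by omega
      rw [h1, h2, hi1I]
  have hcard : {σ : ℕ × ℕ × ℕ | PrivateGenBy w n σ.1 σ.2.1 σ.2.2 I J}.ncard ≤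
      B.card := by
    calc {σ : ℕ × ℕ × ℕ | PrivateGenBy w n σ.1 σ.2.1 σ.2.2 I J}.ncard
        ≤ ((fun m => (I, J - m * q, m * q)) '' ↑B).ncard :=
          Set.ncard_le_ncard hsub (B.finite_toSet.image _)
      _ ≤ (↑B : Set ℕ).ncard := Set.ncard_image_le B.finite_toSet
      _ = B.card := Set.ncard_coe_finset B
  have hexp : expo w I J = (L : ℝ) / (q : ℝ) := by
    simp only [expo, ← hLd, ← hqdef]
  rw [hexp]
  have hgoal : (B.card : ℝ) ≤ (L : ℝ) / (q : ℝ) / 2 := by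
    set a := L / (2 * q) with had
    set b := (L - 2 * q) / q with hbd
    have hBc : B.card = b + 1 - (a + 1) := Nat.card_Icc _ _
    rcases le_or_gt b a with hba | hab
    · have : B.card = 0 := by omega
      rw [this]
      push_cast
      positivity
    · have hBc2 : B.card = b - a := by omega
      have h1 : b * q ≤ L - 2 * q := Nat.div_mul_le_self _ _
      have h2 : L < a * (2 * q) + 2 * q := Nat.lt_div_mul_add (by omega)
      have hb : (b : ℝ) * q ≤ (L : ℝ) - 2 * q := by
        have h1' : b * q + 2 * q ≤ L := by omega
        have := (Nat.cast_le (α := ℝ)).2 h1'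
        push_cast at this
        linarith
      have ha : (L : ℝ) < (a : ℝ) * (2 * q) + 2 * q := by
        have := (Nat.cast_lt (α := ℝ)).2 h2
        push_cast at this
        linarith
      rw [hBc2, Nat.cast_sub hab.le, div_div, le_div_iff₀ (by positivity : (0:ℝ) < (q : ℝ) * 2)]
      nlinarith
  calc ({σ : ℕ × ℕ × ℕ | PrivateGenBy w n σ.1 σ.2.1 σ.2.2 I J}.ncard : ℝ)
      ≤ (B.card : ℝ) := Nat.cast_le.2 hcard
    _ ≤ (L : ℝ) / (q : ℝ) / 2 := hgoal

end Gapped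
end

section
/- For any integer k ≥ 2 and any maximal repetition r in a word w, the number of non-private periodic maximal k-gapped repeats generated from the left by r is at most 3k·e(r) + 1. -/
open scoped Classical

namespace Gapped

variable {α : Type*}

lemma periodSet_nonempty (w : ℕ → α) (i j : ℕ) : {p | IsPeriod w i j p}.Nonempty :=
  ⟨j + 1, Nat.succ_pos j, fun t _ htj => absurd htj (by omega)⟩

lemma period_step {w : ℕ → α} {i j q : ℕ} (hq : IsPeriod w i j q) :
    ∀ m t, i ≤ t → t + m * q ≤ j → w t = w (t + m * q) := by
  intro m
  induction m with
  | zero => intro t _ _; simp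
  | succ m ih =>
    intro t ht hle
    have hq0 : 0 < q := hq.1
    have hmul : (m + 1) * q = m * q + q := by ring
    have h1 : t + q ≤ j := by omega
    calc w t = w (t + q) := hq.2 t ht h1
    _ = w (t + q + m * q) := ih (t + q) (by omega) (by omega)
    _ = w (t + (m + 1) * q) := by congr 1; omega

lemma eq_of_near {w : ℕ → α} {i j q : ℕ} (hq : IsPeriod w i j q) {t s m : ℕ}
    (h : t = s + m * q ∨ s = t + m * q) (hit : i ≤ t) (his : i ≤ s)
    (hjt : t ≤ j) (hjs : s ≤ j) : w t = w s := by
  rcases h with h | h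
  · rw [h] at hjt ⊢
    exact (period_step hq m s his hjt).symm
  · rw [h] at hjs ⊢
    exact period_step hq m t hit hjs

lemma exists_near {q : ℕ} (hq : 0 < q) (a t : ℕ) :
    ∃ s m, (t = s + m * q ∨ s = t + m * q) ∧ a ≤ s ∧ s < a + q := by
  rcases le_or_gt a t with h | h
  · obtain ⟨P, R, hPR, hRq, hP⟩ : ∃ P R, P + R = t - a ∧ R < q ∧ P = (t - a) / q * q :=
      ⟨_, _, Nat.div_add_mod' _ _, Nat.mod_lt _ hq, rfl⟩
    refine ⟨a + R, (t - a) / q, Or.inl ?_, by omega, by omega⟩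
    rw [← hP]
    omega
  · obtain ⟨P, R, hPR, hRq, hP⟩ : ∃ P R, P + R = a - t ∧ R < q ∧ P = (a - t) / q * q :=
      ⟨_, _, Nat.div_add_mod' _ _, Nat.mod_lt _ hq, rfl⟩
    rcases Nat.eq_zero_or_pos R with h0 | h0
    · refine ⟨t + P, (a - t) / q, Or.inr ?_, by omega, by omega⟩
      rw [← hP]
    · refine ⟨t + P + q, (a - t) / q + 1, Or.inr ?_, by omega, by omega⟩
      rw [Nat.succ_mul, ← hP]
      omega

lemma minPer_of_sub {w : ℕ → α} {I J a b : ℕ} (hIa : I ≤ a) (hab : a ≤ b) (hbJ : b ≤ J)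
    (hlen : a + 2 * minPer w I J ≤ b + 1) : minPer w a b = minPer w I J := by
  have hqP : IsPeriod w I J (minPer w I J) := minPer_isPeriod w I J
  have hqpos : 0 < minPer w I J := hqP.1
  have hle : minPer w a b ≤ minPer w I J :=
    minPer_le ⟨hqpos, fun t ht htb => hqP.2 t (hIa.trans ht) (htb.trans hbJ)⟩
  have hdP : IsPeriod w a b (minPer w a b) := minPer_isPeriod w a b
  have hdpos : 0 < minPer w a b := hdP.1
  refine le_antisymm hle (minPer_le ⟨hdpos, fun t ht htd => ?_⟩)
  obtain ⟨s, m, hsm, has, hsq⟩ := exists_near hqpos a t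
  have hsb : s + minPer w a b ≤ b := by omega
  have e1 : w t = w s := eq_of_near hqP hsm ht (hIa.trans has) (by omega) (by omega)
  have e2 : w s = w (s + minPer w a b) := hdP.2 s has hsb
  have e3 : w (s + minPer w a b) = w (t + minPer w a b) := by
    rcases hsm with h | h
    · exact eq_of_near (m := m) hqP (Or.inr (by omega)) (by omega) (by omega) (by omega)
        (by omega)
    · exact eq_of_near (m := m) hqP (Or.inl (by omega)) (by omega) (by omega) (by omega)
        (by omega)
  exact e1.trans (e2.trans e3)

lemma isPeriod_shift {w : ℕ → α} {i j p : ℕ} (hsh : ∀ t, i ≤ t → t ≤ j → w t = w (t + p))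
    (d : ℕ) : IsPeriod w i j d ↔ IsPeriod w (i + p) (j + p) d := by
  constructor
  · rintro ⟨hd, h⟩
    refine ⟨hd, fun t ht htd => ?_⟩
    obtain ⟨s, rfl⟩ : ∃ s, t = s + p := ⟨t - p, by omega⟩
    have h1 : i ≤ s := by omega
    have h2 : s + d ≤ j := by omega
    calc w (s + p) = w s := (hsh s h1 (by omega)).symm
    _ = w (s + d) := h s h1 h2
    _ = w (s + d + p) := hsh (s + d) (by omega) (by omega)
    _ = w (s + p + d) := by congr 1; omega
  · rintro ⟨hd, h⟩
    refine ⟨hd, fun t ht htd => ?_⟩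
    calc w t = w (t + p) := hsh t ht (by omega)
    _ = w (t + p + d) := h (t + p) (by omega) (by omega)
    _ = w (t + d + p) := by congr 1; omega
    _ = w (t + d) := (hsh (t + d) (by omega) (by omega)).symm

lemma minPer_shift {w : ℕ → α} {i j p : ℕ} (hsh : ∀ t, i ≤ t → t ≤ j → w t = w (t + p)) :
    minPer w (i + p) (j + p) = minPer w i j := by
  unfold minPer
  congr 1
  ext d
  simp only [Set.mem_setOf_eq]
  exact (isPeriod_shift hsh d).symm

lemma not_extend_right {w : ℕ → α} {n i j j' p : ℕ}
    (hσ : MaxGapped w n i j p) (hτ : IsGapped w n i j' p) (h : j < j') : False := by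
  obtain ⟨⟨h1, h2, h3, h4, h5⟩, hL, hR⟩ := hσ
  have h6 := hτ.2.2.2.1
  exact hR (by omega) (hτ.2.2.2.2 (j + 1) (by omega) (by omega))

lemma not_extend_left {w : ℕ → α} {n i i' j p : ℕ}
    (hσ : MaxGapped w n i j p) (hτ : IsGapped w n i' j p) (h : i' < i) : False := by
  obtain ⟨⟨h1, h2, h3, h4, h5⟩, hL, hR⟩ := hσ
  have h6 : 1 ≤ i' := hτ.1
  exact hL (by omega) (hτ.2.2.2.2 (i - 1) (by omega) (by omega))

lemma run_unique_j {w : ℕ → α} {n i j j' p : ℕ}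
    (hσ : MaxGapped w n i j p) (hτ : MaxGapped w n i j' p) : j = j' := by
  rcases lt_trichotomy j j' with h | h | h
  · exact (not_extend_right hσ hτ.1 h).elim
  · exact h
  · exact (not_extend_right hτ hσ.1 h).elim

lemma run_unique_i {w : ℕ → α} {n i i' j p : ℕ}
    (hσ : MaxGapped w n i j p) (hτ : MaxGapped w n i' j p) : i = i' := by
  rcases lt_trichotomy i i' with h | h | h
  · exact (not_extend_left hτ hσ.1 h).elim
  · exact h
  · exact (not_extend_left hσ hτ.1 h).elim

lemma struct {w : ℕ → α} {n k I J i1 j1 p : ℕ}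
    (hσ : GenFromLeftPeriodic w n k i1 j1 p I J) :
    I ≤ i1 ∧ i1 ≤ j1 ∧ j1 ≤ J ∧ i1 + 2 * minPer w I J ≤ j1 + 1 ∧
      j1 - i1 + 1 < p ∧ p ≤ k * (J - I + 1) ∧ (i1 ≠ I → j1 = J) := by
  obtain ⟨hmg, halpha, hper, hext, I', J', hext', hne, hlen'⟩ := hσ
  obtain ⟨⟨hi1, hij, hgap, hn, hcopy⟩, hmaxL, hmaxR⟩ := hmg
  obtain ⟨hrmax, hIi, hjJ, hq⟩ := hext
  obtain ⟨hrmax', hIi', hjJ', hq'⟩ := hext'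
  have hgap' : j1 - i1 + 1 < p := hgap
  have hqP : IsPeriod w I J (minPer w I J) := minPer_isPeriod w I J
  have hqpos : 0 < minPer w I J := hqP.1
  have hrep : 2 * minPer w I J ≤ j1 - i1 + 1 := by
    have h2 : (2 : ℕ) * minPer w i1 j1 ≤ j1 - i1 + 1 := hper.1.2
    rw [← hq] at h2
    exact h2
  have h2q : i1 + 2 * minPer w I J ≤ j1 + 1 := by omega
  have hshiftMin : minPer w (i1 + p) (j1 + p) = minPer w i1 j1 := minPer_shift hcopy
  have hq'' : minPer w I' J' = minPer w I J := by rw [hq', hshiftMin, ← hq]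
  have hq'P : IsPeriod w I' J' (minPer w I J) := hq'' ▸ minPer_isPeriod w I' J'
  have hpk : p ≤ k * (J - I + 1) := by
    have hcL : flen i1 j1 ≤ flen I J := by
      have e1 : flen i1 j1 = j1 - i1 + 1 := rfl
      have e2 : flen I J = J - I + 1 := rfl
      omega
    have h3 : (p : ℝ) ≤ (k : ℝ) * ((flen I J : ℕ) : ℝ) :=
      le_trans halpha (mul_le_mul_of_nonneg_left (Nat.cast_le.mpr hcL) (Nat.cast_nonneg k))
    have h4 : p ≤ k * flen I J := by exact_mod_cast h3
    have e2 : flen I J = J - I + 1 := rfl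
    rw [e2] at h4
    exact h4
  have hJ'n : J' ≤ n := hrmax'.1.1.2.2
  have hI1 : 1 ≤ I := hrmax.1.1.1
  have hI'1 : 1 ≤ I' := hrmax'.1.1.1
  have hA : i1 = I ∨ i1 + p = I' := by
    by_contra hcon
    push_neg at hcon
    obtain ⟨hA1, hA2⟩ := hcon
    have hi1I : I < i1 := by omega
    have hI'lt : I' < i1 + p := by omega
    apply hmaxL (by omega)
    have e1 : w (i1 - 1) = w (i1 - 1 + minPer w I J) := hqP.2 (i1 - 1) (by omega) (by omega)
    have e2 : w (i1 - 1 + minPer w I J) = w (i1 - 1 + minPer w I J + p) :=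
      hcopy (i1 - 1 + minPer w I J) (by omega) (by omega)
    have e3 : w (i1 - 1 + p) = w (i1 - 1 + p + minPer w I J) :=
      hq'P.2 (i1 - 1 + p) (by omega) (by omega)
    rw [e1, e2, show i1 - 1 + minPer w I J + p = i1 - 1 + p + minPer w I J from by omega, ← e3]
  have hB : j1 = J ∨ j1 + p = J' := by
    by_contra hcon
    push_neg at hcon
    obtain ⟨hB1, hB2⟩ := hcon
    have hjJ1 : j1 < J := by omega
    have hJ'gt : j1 + p < J' := by omega
    apply hmaxR (by omega)
    have e1 := hqP.2 (j1 + 1 - minPer w I J) (by omega) (by omega)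
    rw [show j1 + 1 - minPer w I J + minPer w I J = j1 + 1 from by omega] at e1
    have e2 : w (j1 + 1 - minPer w I J) = w (j1 + 1 - minPer w I J + p) :=
      hcopy (j1 + 1 - minPer w I J) (by omega) (by omega)
    have e3 := hq'P.2 (j1 + 1 - minPer w I J + p) (by omega) (by omega)
    rw [show j1 + 1 - minPer w I J + p + minPer w I J = j1 + 1 + p from by omega] at e3
    rw [← e1, e2, e3]
  have hC : i1 ≠ I → j1 = J := by
    intro hneI
    rcases hB with h | hB2
    · exact h
    rcases hA with h | hA2
    · exact absurd h hneI
    exfalso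
    have hl : flen I J ≤ flen I' J' := hlen'
    have e1 : flen I J = J - I + 1 := rfl
    have e2 : flen I' J' = J' - I' + 1 := rfl
    have hi1I : I < i1 := by omega
    omega
  exact ⟨hIi, hij, hjJ, h2q, hgap', hpk, hC⟩

lemma spacing_left {w : ℕ → α} {n k I J j1 p j2 p' : ℕ}
    (hσ : GenFromLeftPeriodic w n k I j1 p I J)
    (hτ : GenFromLeftPeriodic w n k I j2 p' I J)
    (hpp : p < p') : p + minPer w I J ≤ p' := by
  obtain ⟨_, hij1, hj1J, h2q1, _, _, _⟩ := struct hσ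
  obtain ⟨_, hij2, hj2J, h2q2, _, _, _⟩ := struct hτ
  have hcopy1 := hσ.1.1.2.2.2.2
  have hcopy2 := hτ.1.1.2.2.2.2
  have hqpos : 0 < minPer w I J := (minPer_isPeriod w I J).1
  have hb1 : min j1 j2 ≤ j1 := min_le_left _ _
  have hb2 : min j1 j2 ≤ j2 := min_le_right _ _
  have hbor : min j1 j2 = j1 ∨ min j1 j2 = j2 := min_choice _ _
  have hsh : ∀ t, I ≤ t → t ≤ min j1 j2 → w t = w (t + p) :=
    fun t ht htb => hcopy1 t ht (by omega)
  have hMeq : minPer w (I + p) (min j1 j2 + p) = minPer w I (min j1 j2) := minPer_shift hsh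
  have hMq : minPer w I (min j1 j2) = minPer w I J :=
    minPer_of_sub le_rfl (by omega) (by omega) (by omega)
  have hdper : IsPeriod w (I + p) (min j1 j2 + p) (p' - p) := by
    refine ⟨by omega, fun t ht htd => ?_⟩
    obtain ⟨s, rfl⟩ : ∃ s, t = s + p := ⟨t - p, by omega⟩
    have h1 : I ≤ s := by omega
    have h2 : s ≤ min j1 j2 := by omega
    calc w (s + p) = w s := (hcopy1 s h1 (by omega)).symm
    _ = w (s + p') := hcopy2 s h1 (by omega)
    _ = w (s + p + (p' - p)) := by congr 1; omega
  have hfin := minPer_le hdper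
  rw [hMeq, hMq] at hfin
  omega

lemma spacing_right {w : ℕ → α} {n k I J i1 p i2 p' : ℕ}
    (hσ : GenFromLeftPeriodic w n k i1 J p I J)
    (hτ : GenFromLeftPeriodic w n k i2 J p' I J)
    (hpp : p < p') : p + minPer w I J ≤ p' := by
  obtain ⟨hIi1, hij1, _, h2q1, _, _, _⟩ := struct hσ
  obtain ⟨hIi2, hij2, _, h2q2, _, _, _⟩ := struct hτ
  have hcopy1 := hσ.1.1.2.2.2.2
  have hcopy2 := hτ.1.1.2.2.2.2
  have hqpos : 0 < minPer w I J := (minPer_isPeriod w I J).1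
  have hb1 : i1 ≤ max i1 i2 := le_max_left _ _
  have hb2 : i2 ≤ max i1 i2 := le_max_right _ _
  have hbor : max i1 i2 = i1 ∨ max i1 i2 = i2 := max_choice _ _
  have hsh : ∀ t, max i1 i2 ≤ t → t ≤ J → w t = w (t + p) :=
    fun t ht htb => hcopy1 t (by omega) htb
  have hMeq : minPer w (max i1 i2 + p) (J + p) = minPer w (max i1 i2) J := minPer_shift hsh
  have hMq : minPer w (max i1 i2) J = minPer w I J :=
    minPer_of_sub (by omega) (by omega) le_rfl (by omega)
  have hdper : IsPeriod w (max i1 i2 + p) (J + p) (p' - p) := by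
    refine ⟨by omega, fun t ht htd => ?_⟩
    obtain ⟨s, rfl⟩ : ∃ s, t = s + p := ⟨t - p, by omega⟩
    have h1 : max i1 i2 ≤ s := by omega
    calc w (s + p) = w s := (hcopy1 s (by omega) (by omega)).symm
    _ = w (s + p') := hcopy2 s (by omega) (by omega)
    _ = w (s + p + (p' - p)) := by congr 1; omega
  have hfin := minPer_le hdper
  rw [hMeq, hMq] at hfin
  omega


/-- For `k ≥ 2` and any maximal repetition `w[I..J]`, the number of non-private periodic
maximal `k`-gapped repeats generated from the left by `w[I..J]` is at most `3k·e(r) + 1`. -/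
theorem count_nonprivate_generated_from_left (w : ℕ → α) (n k : ℕ) (hk : 2 ≤ k)
    (I J : ℕ) (hr : MaxRep w n I J) :
    ({σ : ℕ × ℕ × ℕ | GenFromLeftPeriodic w n k σ.1 σ.2.1 σ.2.2 I J}.ncard : ℝ)
      ≤ 3 * k * expo w I J + 1 := by
  classical
  have hqpos : 0 < minPer w I J := (minPer_isPeriod w I J).1
  set S : Set (ℕ × ℕ × ℕ) := {σ : ℕ × ℕ × ℕ | GenFromLeftPeriodic w n k σ.1 σ.2.1 σ.2.2 I J}
    with hS
  set N : ℕ := k * (J - I + 1) / minPer w I J with hN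
  set C1 : Set (ℕ × ℕ × ℕ) := {σ | σ ∈ S ∧ σ.1 = I} with hC1
  set C2 : Set (ℕ × ℕ × ℕ) := {σ | σ ∈ S ∧ σ.1 ≠ I} with hC2
  have hmap : ∀ σ ∈ S, σ.2.2 / minPer w I J ∈ Finset.Icc 2 N := by
    rintro ⟨i1, j1, p⟩ hσ
    replace hσ : GenFromLeftPeriodic w n k i1 j1 p I J := hσ
    obtain ⟨hIi, hij, hjJ, h2q, hgap, hpk, _⟩ := struct hσ
    simp only [Finset.mem_Icc]
    refine ⟨?_, Nat.div_le_div_right hpk⟩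
    rw [Nat.le_div_iff_mul_le hqpos]
    omega
  have hinj1 : Set.InjOn (fun σ : ℕ × ℕ × ℕ => σ.2.2 / minPer w I J) C1 := by
    rintro ⟨i1, j1, p⟩ ⟨hσ, hi1⟩ ⟨i2, j2, p2⟩ ⟨hτ, hi2⟩ hfeq
    replace hσ : GenFromLeftPeriodic w n k i1 j1 p I J := hσ
    replace hτ : GenFromLeftPeriodic w n k i2 j2 p2 I J := hτ
    simp only at hi1 hi2 hfeq
    rw [hi1] at hσ
    rw [hi2] at hτ
    have hp : p = p2 := by
      by_contra hne
      rcases Nat.lt_or_ge p p2 with h | h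
      · have hsp := spacing_left hσ hτ h
        have h1 : p / minPer w I J + 1 ≤ p2 / minPer w I J :=
          le_trans (le_of_eq (Nat.add_div_right p hqpos).symm) (Nat.div_le_div_right hsp)
        omega
      · have hlt : p2 < p := by omega
        have hsp := spacing_left hτ hσ hlt
        have h1 : p2 / minPer w I J + 1 ≤ p / minPer w I J :=
          le_trans (le_of_eq (Nat.add_div_right p2 hqpos).symm) (Nat.div_le_div_right hsp)
        omega
    subst hp
    have hj : j1 = j2 := run_unique_j hσ.1 hτ.1
    rw [hi1, hi2, hj]
  have hinj2 : Set.InjOn (fun σ : ℕ × ℕ × ℕ => σ.2.2 / minPer w I J) C2 := by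
    rintro ⟨i1, j1, p⟩ ⟨hσ, hi1⟩ ⟨i2, j2, p2⟩ ⟨hτ, hi2⟩ hfeq
    replace hσ : GenFromLeftPeriodic w n k i1 j1 p I J := hσ
    replace hτ : GenFromLeftPeriodic w n k i2 j2 p2 I J := hτ
    simp only at hi1 hi2 hfeq
    have hj1 : j1 = J := (struct hσ).2.2.2.2.2.2 hi1
    have hj2 : j2 = J := (struct hτ).2.2.2.2.2.2 hi2
    rw [hj1] at hσ
    rw [hj2] at hτ
    have hp : p = p2 := by
      by_contra hne
      rcases Nat.lt_or_ge p p2 with h | h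
      · have hsp := spacing_right hσ hτ h
        have h1 : p / minPer w I J + 1 ≤ p2 / minPer w I J :=
          le_trans (le_of_eq (Nat.add_div_right p hqpos).symm) (Nat.div_le_div_right hsp)
        omega
      · have hlt : p2 < p := by omega
        have hsp := spacing_right hτ hσ hlt
        have h1 : p2 / minPer w I J + 1 ≤ p / minPer w I J :=
          le_trans (le_of_eq (Nat.add_div_right p2 hqpos).symm) (Nat.div_le_div_right hsp)
        omega
    subst hp
    have hi : i1 = i2 := run_unique_i hσ.1 hτ.1
    rw [hj1, hj2, hi]
  have himg1 : (fun σ : ℕ × ℕ × ℕ => σ.2.2 / minPer w I J) '' C1 ⊆ ↑(Finset.Icc 2 N) := by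
    rintro x ⟨σ, hσ, rfl⟩
    exact hmap σ hσ.1
  have himg2 : (fun σ : ℕ × ℕ × ℕ => σ.2.2 / minPer w I J) '' C2 ⊆ ↑(Finset.Icc 2 N) := by
    rintro x ⟨σ, hσ, rfl⟩
    exact hmap σ hσ.1
  have hfin1 : C1.Finite :=
    Set.Finite.of_finite_image (Set.Finite.subset (Finset.Icc 2 N).finite_toSet himg1) hinj1
  have hfin2 : C2.Finite :=
    Set.Finite.of_finite_image (Set.Finite.subset (Finset.Icc 2 N).finite_toSet himg2) hinj2
  have hcard1 : C1.ncard ≤ N - 1 := by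
    have h1 := Set.ncard_le_ncard himg1 (Finset.Icc 2 N).finite_toSet
    rw [Set.ncard_image_of_injOn hinj1, Set.ncard_coe_finset, Nat.card_Icc] at h1
    omega
  have hcard2 : C2.ncard ≤ N - 1 := by
    have h1 := Set.ncard_le_ncard himg2 (Finset.Icc 2 N).finite_toSet
    rw [Set.ncard_image_of_injOn hinj2, Set.ncard_coe_finset, Nat.card_Icc] at h1
    omega
  have hunion : S = C1 ∪ C2 := by
    ext σ
    simp only [hC1, hC2, Set.mem_union, Set.mem_setOf_eq]
    tauto
  have htot : S.ncard ≤ (N - 1) + (N - 1) := by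
    calc S.ncard = (C1 ∪ C2).ncard := by rw [← hunion]
    _ ≤ C1.ncard + C2.ncard := Set.ncard_union_le C1 C2
    _ ≤ (N - 1) + (N - 1) := Nat.add_le_add hcard1 hcard2
  have hNle : (N : ℝ) ≤ (k : ℝ) * expo w I J := by
    have h1 : (N : ℝ) ≤ ((k * (J - I + 1) : ℕ) : ℝ) / ((minPer w I J : ℕ) : ℝ) :=
      Nat.cast_div_le
    have h2 : expo w I J = ((J - I + 1 : ℕ) : ℝ) / ((minPer w I J : ℕ) : ℝ) := rfl
    rw [h2]
    calc (N : ℝ) ≤ _ := h1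
    _ = (k : ℝ) * (((J - I + 1 : ℕ) : ℝ) / ((minPer w I J : ℕ) : ℝ)) := by
        push_cast; ring
  have hexp0 : 0 ≤ (k : ℝ) * expo w I J := by
    apply mul_nonneg (Nat.cast_nonneg k)
    unfold expo
    positivity
  calc ((S.ncard : ℕ) : ℝ) ≤ (((N - 1) + (N - 1) : ℕ) : ℝ) := Nat.cast_le.mpr htot
  _ ≤ 2 * (N : ℝ) := by
      have hle : ((N - 1 : ℕ) : ℝ) ≤ (N : ℝ) := Nat.cast_le.mpr (Nat.sub_le _ _)
      push_cast
      push_cast at hle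
      linarith
  _ ≤ 2 * ((k : ℝ) * expo w I J) := by linarith
  _ ≤ 3 * k * expo w I J + 1 := by linarith


end Gapped
end
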